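/- The Hamiltonians K₁ = q₁²p₁ − p₁² + α₂q₁ − q₂²p₂/2 − p₂²/2 − (α₃/2)q₂ + (3/2)p₁p₂ and K₂ = −α₃²p₁ + q₂⁴p₂² + 2q₂²p₂³ + p₂⁴ + 2α₃q₂³p₂ + 4(α₁+α₃)q₂p₂² + α₃²q₂² + α₃(2α₁+α₃)p₂ − p₂(8q₁p₁q₂p₂ + 6p₁q₂²p₂ + 4q₁²p₁p₂ + 2p₁p₂² − p₁²p₂ + 4α₂q₁p₂ + 4α₃q₁p₁ + 6α₃p₁q₂) Poisson-commute: {K₁, K₂} = ∂K₁/∂p₁·∂K₂/∂q₁ − ∂K₁/∂q₁·∂K₂/∂p₁ + ∂K₁/∂p₂·∂K₂/∂q₂ − ∂K₁/∂q₂·∂K₂/∂p₂ = 0, provided 2α₁ + 2α₂ + α₃ = 0. -/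
import Mathlib


open MvPolynomial

/-- Variables: X 0 = q₁, X 1 = p₁, X 2 = q₂, X 3 = p₂. -/
noncomputable def K1 (α₂ α₃ : ℂ) : MvPolynomial (Fin 4) ℂ :=
  X 0 ^ 2 * X 1 - X 1 ^ 2 + C α₂ * X 0 - C (1/2 : ℂ) * X 2 ^ 2 * X 3
    - C (1/2 : ℂ) * X 3 ^ 2 - C (α₃ / 2) * X 2 + C (3/2 : ℂ) * X 1 * X 3

noncomputable def K2 (α₁ α₂ α₃ : ℂ) : MvPolynomial (Fin 4) ℂ :=
  -C (α₃ ^ 2) * X 1 + X 2 ^ 4 * X 3 ^ 2 + 2 * X 2 ^ 2 * X 3 ^ 3 + X 3 ^ 4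
    + C (2 * α₃) * X 2 ^ 3 * X 3 + C (4 * (α₁ + α₃)) * X 2 * X 3 ^ 2
    + C (α₃ ^ 2) * X 2 ^ 2 + C (α₃ * (2 * α₁ + α₃)) * X 3
    - X 3 * (8 * X 0 * X 1 * X 2 * X 3 + 6 * X 1 * X 2 ^ 2 * X 3
      + 4 * X 0 ^ 2 * X 1 * X 3 + 2 * X 1 * X 3 ^ 2 - X 1 ^ 2 * X 3
      + C (4 * α₂) * X 0 * X 3 + C (4 * α₃) * X 0 * X 1 + C (6 * α₃) * X 1 * X 2)

/-- The Poisson bracket {F,G} = ∂F/∂p₁·∂G/∂q₁ − ∂F/∂q₁·∂G/∂p₁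
                              + ∂F/∂p₂·∂G/∂q₂ − ∂F/∂q₂·∂G/∂p₂. -/
noncomputable def pbr (F G : MvPolynomial (Fin 4) ℂ) : MvPolynomial (Fin 4) ℂ :=
  pderiv 1 F * pderiv 0 G - pderiv 0 F * pderiv 1 G
    + pderiv 3 F * pderiv 2 G - pderiv 2 F * pderiv 3 G

set_option maxHeartbeats 4000000 in
/-- K₁ and K₂ Poisson-commute when 2α₁ + 2α₂ + α₃ = 0. -/
theorem K1_K2_poisson_commute (α₁ α₂ α₃ : ℂ)
    (hrel : 2 * α₁ + 2 * α₂ + α₃ = 0) :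
    pbr (K1 α₂ α₃) (K2 α₁ α₂ α₃) = 0 := by
  have h3 : α₃ = -(2*α₁) - 2*α₂ := by linear_combination hrel
  subst h3
  have hn : ∀ (i : Fin 4) (n : ℕ) (x : MvPolynomial (Fin 4) ℂ), pderiv i ((n : MvPolynomial (Fin 4) ℂ) * x) = (n : MvPolynomial (Fin 4) ℂ) * pderiv i x := fun i n x => by
    rw [(pderiv i).leibniz, (pderiv i).map_natCast n]; simp [mul_comm]
  have h2 := fun i x => hn i 2 x
  have h4 := fun i x => hn i 4 x
  have h6 := fun i x => hn i 6 x
  have h8 := fun i x => hn i 8 x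
  norm_num only at h2 h4 h6 h8
  have hx01 : pderiv (0:Fin 4) (X 1 : MvPolynomial (Fin 4) ℂ) = 0 := pderiv_X_of_ne (by decide)
  have hx02 : pderiv (0:Fin 4) (X 2 : MvPolynomial (Fin 4) ℂ) = 0 := pderiv_X_of_ne (by decide)
  have hx03 : pderiv (0:Fin 4) (X 3 : MvPolynomial (Fin 4) ℂ) = 0 := pderiv_X_of_ne (by decide)
  have hx10 : pderiv (1:Fin 4) (X 0 : MvPolynomial (Fin 4) ℂ) = 0 := pderiv_X_of_ne (by decide)
  have hx12 : pderiv (1:Fin 4) (X 2 : MvPolynomial (Fin 4) ℂ) = 0 := pderiv_X_of_ne (by decide)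
  have hx13 : pderiv (1:Fin 4) (X 3 : MvPolynomial (Fin 4) ℂ) = 0 := pderiv_X_of_ne (by decide)
  have hx20 : pderiv (2:Fin 4) (X 0 : MvPolynomial (Fin 4) ℂ) = 0 := pderiv_X_of_ne (by decide)
  have hx21 : pderiv (2:Fin 4) (X 1 : MvPolynomial (Fin 4) ℂ) = 0 := pderiv_X_of_ne (by decide)
  have hx23 : pderiv (2:Fin 4) (X 3 : MvPolynomial (Fin 4) ℂ) = 0 := pderiv_X_of_ne (by decide)
  have hx30 : pderiv (3:Fin 4) (X 0 : MvPolynomial (Fin 4) ℂ) = 0 := pderiv_X_of_ne (by decide)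
  have hx31 : pderiv (3:Fin 4) (X 1 : MvPolynomial (Fin 4) ℂ) = 0 := pderiv_X_of_ne (by decide)
  have hx32 : pderiv (3:Fin 4) (X 2 : MvPolynomial (Fin 4) ℂ) = 0 := pderiv_X_of_ne (by decide)
  simp only [pbr, K1, K2]
  simp only [map_add, map_sub, map_mul, map_neg, pderiv_X_self, hx01, hx02, hx03, hx10, hx12, hx13, hx20, hx21, hx23, hx30, hx31, hx32, pderiv_C, Derivation.leibniz, Derivation.leibniz_pow, smul_eq_mul, h2, h4, h6, h8]
  apply MvPolynomial.funext (fun x => ?_)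
  simp only [nsmul_eq_mul, Nat.cast_ofNat, map_add, map_sub, map_mul, map_neg, map_pow, map_ofNat, eval_C, eval_X, map_zero, map_one, map_natCast]
  ring
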